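/- Let g, r, d, s, e be positive integers with r ≥ 2, d ≤ g − 1, e ≤ g − 1, ρ(g,r,d) = −2, ρ(g,s,e) = −1, and e − 2s > d − 2r + 1. Then κ(g,r,d) > κ(g,s,e). -/

import Mathlib

noncomputable section

/-- The Brill--Noether number `ρ(g,r,d) = g - (r+1)(g-d+r)`. -/
def rho (g r d : ℤ) : ℤ := g - (r + 1) * (g - d + r)

/-- Pflueger's Brill--Noether number `ρ_k(g,r,d)`, the maximum of
`ρ(g,r-ℓ,d) - ℓk` over integers `0 ≤ ℓ ≤ min r (g-d+r-1)`. -/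
def rhoK (g r d k : ℤ) : ℤ :=
  sSup ((fun ℓ : ℤ => rho g (r - ℓ) d - ℓ * k) '' Set.Icc 0 (min r (g - d + r - 1)))

/-- `κ(g,r,d)`: the greatest integer `k ≥ 1` such that `ρ_k(g,r,d) ≥ 0`. -/
def kappa (g r d : ℤ) : ℤ := sSup {k : ℤ | 1 ≤ k ∧ 0 ≤ rhoK g r d k}

/-- `d_max(g,r) = r + ⌈gr/(r+1)⌉ - 1`, the largest `d` with `ρ(g,r,d) < 0`. -/
def dmax (g r : ℤ) : ℤ := r + ⌈((g : ℚ) * r) / ((r : ℚ) + 1)⌉ - 1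

/-! Writing `ρ₀ = ρ(g,r,d)` and `w = g - d + r`, one has
`ρ(g,r-ℓ,d) - ℓk = ρ₀ + ℓ(r + 1 + w - k) - ℓ²`. The term `ℓ = 1` gives `ρ_k ≥ 0` for
`k ≤ r + w + ρ₀`, while for larger `k` every term is at most `ρ₀(1 - ℓ) - ℓ²`, which is negative
for all integers `ℓ ≥ 0` as soon as `-4 < ρ₀ < 0`. Hence `κ(g,r,d) = r + w + ρ₀`, and the
theorem becomes the inequality `s + (g - e + s) - 1 < r + (g - d + r) - 2`. -/

lemma rho_sub_rank (g r d ℓ : ℤ) :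
    rho g (r - ℓ) d = rho g r d + ℓ * (r + 1 + (g - d + r)) - ℓ ^ 2 := by
  unfold rho; ring

lemma le_rhoK {g r d k ℓ : ℤ} (h0 : 0 ≤ ℓ) (hℓ : ℓ ≤ min r (g - d + r - 1)) :
    rho g (r - ℓ) d - ℓ * k ≤ rhoK g r d k :=
  le_csSup ((Set.finite_Icc _ _).image _).bddAbove ⟨ℓ, ⟨h0, hℓ⟩, rfl⟩

lemma rhoK_neg_of_forall {g r d k : ℤ} (hne : 0 ≤ min r (g - d + r - 1))
    (h : ∀ ℓ, 0 ≤ ℓ → rho g (r - ℓ) d - ℓ * k < 0) : rhoK g r d k < 0 := by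
  have hmem : rhoK g r d k ∈ (fun ℓ : ℤ => rho g (r - ℓ) d - ℓ * k) ''
      Set.Icc 0 (min r (g - d + r - 1)) :=
    ((Set.nonempty_Icc.mpr hne).image _).csSup_mem ((Set.finite_Icc _ _).image _)
  obtain ⟨ℓ, ⟨h0, -⟩, hℓ⟩ := hmem
  exact hℓ ▸ h ℓ h0

theorem rhoK_nonneg_iff {g r d k : ℤ} (hr : 1 ≤ r) (hw : 2 ≤ g - d + r)
    (hρ : -4 < rho g r d) (hρ' : rho g r d < 0) :
    0 ≤ rhoK g r d k ↔ k ≤ r + (g - d + r) + rho g r d := by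
  constructor
  · intro hk
    by_contra! hk'
    refine (rhoK_neg_of_forall (le_min (by omega) (by omega)) fun ℓ h0 => ?_).not_ge hk
    rw [rho_sub_rank]
    -- `4(ℓ² + ρ₀ℓ - ρ₀) = (2ℓ + ρ₀)² - ρ₀(ρ₀ + 4) > 0`
    nlinarith [mul_nonneg h0 (sub_nonneg.mpr hk'), sq_nonneg (2 * ℓ + rho g r d),
      mul_neg_of_neg_of_pos hρ' (show 0 < rho g r d + 4 by omega)]
  · intro hk
    have h1 := le_rhoK (k := k) zero_le_one (le_min hr (by omega) : (1 : ℤ) ≤ min r (g - d + r - 1))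
    rw [rho_sub_rank] at h1
    linarith

theorem kappa_eq_add_rho {g r d : ℤ} (hr : 1 ≤ r) (hw : 2 ≤ g - d + r)
    (hρ : -4 < rho g r d) (hρ' : rho g r d < 0) (hK : 1 ≤ r + (g - d + r) + rho g r d) :
    kappa g r d = r + (g - d + r) + rho g r d := by
  have hset : {k : ℤ | 1 ≤ k ∧ 0 ≤ rhoK g r d k} = Set.Icc 1 (r + (g - d + r) + rho g r d) := by
    ext k
    rw [Set.mem_ofPred_eq, rhoK_nonneg_iff hr hw hρ hρ', Set.mem_Icc]
  rw [kappa, hset, csSup_Icc hK]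

theorem stmt17_general (g r d s e : ℤ) (hr : 2 ≤ r)
    (hs : 1 ≤ s) (hdg : d ≤ g - 1) (heg : e ≤ g - 1)
    (h1 : rho g r d = -2) (h2 : rho g s e = -1)
    (h3 : d - 2 * r + 1 < e - 2 * s) :
    kappa g s e < kappa g r d := by
  rw [kappa_eq_add_rho (by omega) (by omega) (by omega) (by omega) (by omega),
    kappa_eq_add_rho (by omega) (by omega) (by omega) (by omega) (by omega), h1, h2]
  omega

theorem stmt17 (g r d s e : ℤ) (hg : 1 ≤ g) (hr : 2 ≤ r) (hd : 1 ≤ d)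
    (hs : 1 ≤ s) (he : 1 ≤ e) (hdg : d ≤ g - 1) (heg : e ≤ g - 1)
    (h1 : rho g r d = -2) (h2 : rho g s e = -1)
    (h3 : d - 2 * r + 1 < e - 2 * s) :
    kappa g s e < kappa g r d :=
  stmt17_general g r d s e hr hs hdg heg h1 h2 h3
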